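/- arXiv:0710.5839 — 2 statements merged into one kernel-verified Lean document; each statement's English description precedes it below -/
import Mathlib

section
/- Let a be an L^0-linear homogeneous-of-type-one projection in L⁺(D_i : i ∈ I). Then there exist a partition (π_i)_{i∈I} of the unit in ∇ and unit vectors φ_i ∈ D_i such that a = (o)-∑_{i∈I} π_i (φ_i ⊗ φ_i). -/
open MeasureTheory

namespace KHPaper

variable {Ω : Type} [MeasurableSpace Ω] {μ : Measure Ω}

/-- `L⁰(Ω)`: measurable complex functions modulo a.e. equality. -/
abbrev L0 (Ω : Type) [MeasurableSpace Ω] (μ : Measure Ω) := Ω →ₘ[μ] ℂ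
/-- real-valued `L⁰`. -/
abbrev L0R (Ω : Type) [MeasurableSpace Ω] (μ : Measure Ω) := Ω →ₘ[μ] ℝ

noncomputable instance : CommRing (L0 Ω μ) :=
  { (inferInstance : AddCommGroup (L0 Ω μ)),
    (inferInstance : CommMonoid (L0 Ω μ)) with
    left_distrib := by
      intro a b c
      apply AEEqFun.ext
      filter_upwards [AEEqFun.coeFn_mul a (b + c), AEEqFun.coeFn_add b c,
        AEEqFun.coeFn_mul a b, AEEqFun.coeFn_mul a c,
        AEEqFun.coeFn_add (a * b) (a * c)] with x h1 h2 h3 h4 h5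
      simp only [h1, h5, Pi.mul_apply, Pi.add_apply, h2, h3, h4, mul_add]
    right_distrib := by
      intro a b c
      apply AEEqFun.ext
      filter_upwards [AEEqFun.coeFn_mul (a + b) c, AEEqFun.coeFn_add a b,
        AEEqFun.coeFn_mul a c, AEEqFun.coeFn_mul b c,
        AEEqFun.coeFn_add (a * c) (b * c)] with x h1 h2 h3 h4 h5
      simp only [h1, h5, Pi.mul_apply, Pi.add_apply, h2, h3, h4, add_mul]
    zero_mul := by
      intro a
      apply AEEqFun.ext
      filter_upwards [AEEqFun.coeFn_mul 0 a, AEEqFun.coeFn_zero (β := ℂ) (μ := μ)] with x h1 h2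
      simp [h1, h2]
    mul_zero := by
      intro a
      apply AEEqFun.ext
      filter_upwards [AEEqFun.coeFn_mul a 0, AEEqFun.coeFn_zero (β := ℂ) (μ := μ)] with x h1 h2
      simp [h1, h2] }

/-- pointwise absolute value `L⁰ → L⁰ℝ`. -/
noncomputable def absL (f : L0 Ω μ) : L0R Ω μ := f.comp (fun z : ℂ => ‖z‖) continuous_norm
/-- pointwise real part. -/
noncomputable def reL (f : L0 Ω μ) : L0R Ω μ := f.comp Complex.re Complex.continuous_re
/-- pointwise complex conjugation. -/
noncomputable def conjL (f : L0 Ω μ) : L0 Ω μ :=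
  f.comp (starRingEnd ℂ) (by continuity)
/-- embedding of real `L⁰` into complex `L⁰`. -/
noncomputable def ofRealL (f : L0R Ω μ) : L0 Ω μ := f.comp Complex.ofReal Complex.continuous_ofReal
/-- pointwise square root on real `L⁰`. -/
noncomputable def sqrtL (f : L0R Ω μ) : L0R Ω μ := f.comp Real.sqrt Real.continuous_sqrt
/-- constants. -/
noncomputable def constL (Ω : Type) [MeasurableSpace Ω] (μ : Measure Ω) (c : ℂ) : L0 Ω μ :=
  AEEqFun.const Ω c

/-- idempotents of `L⁰` (the Boolean algebra `∇`). -/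
def IsIdem (π : L0 Ω μ) : Prop := π * π = π

/-- A family of idempotents is a partition of the unit in `∇`. -/
def IsPartition {ι : Type*} (π : ι → L0 Ω μ) : Prop :=
  (∀ i, IsIdem (π i)) ∧ (∀ i j, i ≠ j → π i * π j = 0) ∧
    (∀ e : L0 Ω μ, IsIdem e → (∀ i, π i * e = 0) → e = 0)

/-- a decreasing net of nonnegative elements of `L⁰ℝ` has infimum zero. -/
def InfZero {ι : Type*} (e : ι → L0R Ω μ) : Prop :=
  (∀ i, 0 ≤ e i) ∧ ∀ g : L0R Ω μ, (∀ i, g ≤ e i) → g ≤ 0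

/-- `(o)`-convergence of a net in `L⁰ℝ`. -/
def OConv {ι : Type*} [Preorder ι] (f : ι → L0R Ω μ) (l : L0R Ω μ) : Prop :=
  ∃ e : ι → L0R Ω μ, Antitone e ∧ InfZero e ∧ ∀ i, |f i - l| ≤ e i

/-- `(o)`-summability of a family in `L⁰ℝ` (order convergence of the net of partial sums). -/
def OSummable {ι : Type*} (g : ι → L0R Ω μ) : Prop :=
  ∃ s : L0R Ω μ, OConv (fun F : Finset ι => ∑ i ∈ F, g i) s

section LNS

variable {X : Type*} [AddCommGroup X]

/-- An `L⁰`-valued norm making `X` a lattice-normed space over `L⁰` (complex vector space case). -/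
structure LNSNorm (Ω : Type) [MeasurableSpace Ω] (μ : Measure Ω)
    (X : Type*) [AddCommGroup X] [Module ℂ X] where
  nrm : X → L0R Ω μ
  nrm_nonneg : ∀ x, 0 ≤ nrm x
  nrm_eq_zero : ∀ x, nrm x = 0 ↔ x = 0
  nrm_smul : ∀ (c : ℂ) (x : X), nrm (c • x) = ‖c‖ • nrm x
  nrm_triangle : ∀ x y, nrm (x + y) ≤ nrm x + nrm y

variable [Module ℂ X]

/-- `d`-decomposability (Kantorovich norm). -/
def LNSNorm.DDecomp (N : LNSNorm Ω μ X) : Prop :=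
  ∀ (x : X) (e₁ e₂ : L0R Ω μ), 0 ≤ e₁ → 0 ≤ e₂ → e₁ ⊓ e₂ = 0 → N.nrm x = e₁ + e₂ →
    ∃ x₁ x₂ : X, x = x₁ + x₂ ∧ N.nrm x₁ = e₁ ∧ N.nrm x₂ = e₂

/-- `(bo)`-convergence of a net in `X`. -/
def LNSNorm.BOConv (N : LNSNorm Ω μ X) {ι : Type*} [Preorder ι] (f : ι → X) (l : X) : Prop :=
  OConv (fun i => N.nrm (f i - l)) 0

/-- `(bo)`-Cauchy nets. -/
def LNSNorm.BOCauchy (N : LNSNorm Ω μ X) {ι : Type*} [Preorder ι] (f : ι → X) : Prop :=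
  ∃ e : ι → L0R Ω μ, Antitone e ∧ InfZero e ∧
    ∀ i j k, k ≤ i → k ≤ j → N.nrm (f i - f j) ≤ e k

/-- `(bo)`-completeness. -/
def LNSNorm.BOComplete (N : LNSNorm Ω μ X) : Prop :=
  ∀ (ι : Type) (_ : Nonempty ι) (_ : SemilatticeSup ι) (f : ι → X),
    N.BOCauchy f → ∃ l : X, N.BOConv f l

end LNS

section Norms
variable {X : Type*} [AddCommGroup X]
def DDecompN (nrm : X → L0R Ω μ) : Prop :=
  ∀ (x : X) (e₁ e₂ : L0R Ω μ), 0 ≤ e₁ → 0 ≤ e₂ → e₁ ⊓ e₂ = 0 → nrm x = e₁ + e₂ →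
    ∃ x₁ x₂ : X, x = x₁ + x₂ ∧ nrm x₁ = e₁ ∧ nrm x₂ = e₂
def BOConvN (nrm : X → L0R Ω μ) {ι : Type*} [Preorder ι] (f : ι → X) (l : X) : Prop :=
  OConv (fun i => nrm (f i - l)) 0
def BOCauchyN (nrm : X → L0R Ω μ) {ι : Type*} [Preorder ι] (f : ι → X) : Prop :=
  ∃ e : ι → L0R Ω μ, Antitone e ∧ InfZero e ∧
    ∀ i j k, k ≤ i → k ≤ j → nrm (f i - f j) ≤ e k
def BOCompleteN (nrm : X → L0R Ω μ) : Prop :=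
  ∀ (ι : Type) (_ : Nonempty ι) (_ : SemilatticeSup ι) (f : ι → X),
    BOCauchyN nrm f → ∃ l : X, BOConvN nrm f l
def BODenseN (nrm : X → L0R Ω μ) (D : Set X) : Prop :=
  ∀ x : X, ∃ (ι : Type) (_ : Nonempty ι) (_ : SemilatticeSup ι) (f : ι → X),
    (∀ i, f i ∈ D) ∧ BOConvN nrm f x
end Norms

/-- An `L⁰`-valued inner product on an `L⁰`-module. -/
structure KHInner (Ω : Type) [MeasurableSpace Ω] (μ : Measure Ω)
    (X : Type*) [AddCommGroup X] [Module (L0 Ω μ) X] where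
  inner : X → X → L0 Ω μ
  add_left : ∀ x y z, inner (x + y) z = inner x z + inner y z
  smul_left : ∀ (c : L0 Ω μ) (x y : X), inner (c • x) y = c * inner x y
  conj_symm : ∀ x y, inner x y = conjL (inner y x)
  self_real : ∀ x, inner x x = ofRealL (reL (inner x x))
  self_nonneg : ∀ x, 0 ≤ reL (inner x x)
  definite : ∀ x, inner x x = 0 → x = 0

section KH
variable {X : Type*} [AddCommGroup X] [Module (L0 Ω μ) X]
noncomputable def KHInner.knorm (K : KHInner Ω μ X) (x : X) : L0R Ω μ :=
  sqrtL (reL (K.inner x x))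
/-- `X` is a Kaplansky-Hilbert module: the induced norm is d-decomposable and (bo)-complete. -/
def KHInner.IsKH (K : KHInner Ω μ X) : Prop := DDecompN K.knorm ∧ BOCompleteN K.knorm

variable (K : KHInner Ω μ X) (D : Submodule (L0 Ω μ) X)
/-- operators with domain `D` mapping into `D`. -/
def MapsD (a : D →ₗ[L0 Ω μ] X) : Prop := ∀ φ : D, a φ ∈ D
def IsAdjAt (a : D →ₗ[L0 Ω μ] X) (ψ χ : X) : Prop :=
  ∀ φ : D, K.inner (a φ) ψ = K.inner (φ : X) χ
def AdjDomain (a : D →ₗ[L0 Ω μ] X) : Set X := {ψ | ∃ χ, IsAdjAt K D a ψ χ}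
/-- `L⁺(D)`. -/
def LPlus : Set (D →ₗ[L0 Ω μ] X) :=
  {a | MapsD D a ∧ (D : Set X) ⊆ AdjDomain K D a ∧
       ∀ ψ ∈ D, ∃ χ ∈ D, IsAdjAt K D a ψ χ}
def BOClosableOp (a : D →ₗ[L0 Ω μ] X) : Prop :=
  ∀ (ι : Type) (_ : Nonempty ι) (_ : SemilatticeSup ι) (f : ι → D) (y : X),
    BOConvN K.knorm (fun i => (f i : X)) 0 → BOConvN K.knorm (fun i => a (f i)) y → y = 0
/-- composition `a ∘ b` of operators on `D`, when `b` maps into `D`. -/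
noncomputable def compD (a b : D →ₗ[L0 Ω μ] X) (hb : MapsD D b) : D →ₗ[L0 Ω μ] X :=
  a.comp (LinearMap.codRestrict D b hb)

/-- endomorphism version: an operator on `D` having an adjoint with domain `⊇ D` and values in `D`. -/
def HasAdjE (a : Module.End (L0 Ω μ) D) : Prop :=
  ∀ ψ : D, ∃ χ : D, ∀ φ : D, K.inner (a φ : X) (ψ : X) = K.inner (φ : X) (χ : X)
/-- `L⁺(D)` realized inside `End(D)`. -/
def LPlusE : Set (Module.End (L0 Ω μ) D) := {a | HasAdjE K D a}
def IsAdjPairE (a b : Module.End (L0 Ω μ) D) : Prop :=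
  ∀ φ ψ : D, K.inner (a φ : X) (ψ : X) = K.inner (φ : X) (b ψ : X)
/-- the rank one operator `φ ⊗ ψ` on `D`. -/
noncomputable def rankOneE (φ ψ : D) : Module.End (L0 Ω μ) D where
  toFun η := K.inner (η : X) (ψ : X) • φ
  map_add' a b := by
    show K.inner (↑(a + b)) _ • φ = _
    rw [Submodule.coe_add, K.add_left]
    exact add_smul _ _ φ
  map_smul' c a := by
    show K.inner (↑(c • a)) _ • φ = _
    rw [Submodule.coe_smul, K.smul_left, RingHom.id_apply]
    exact mul_smul c _ φ
end KH

section Ops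
variable {M : Type*} [AddCommGroup M] [Module (L0 Ω μ) M]
/-- finite-generated operator: its range is a finite-generated submodule. -/
def FinGenOp (a : Module.End (L0 Ω μ) M) : Prop :=
  ∃ (n : ℕ) (g : Fin n → M), ∀ x : M, ∃ c : Fin n → L0 Ω μ, a x = ∑ i, c i • g i
def IsSubalgebraSet (U : Set (Module.End (L0 Ω μ) M)) : Prop :=
  (∀ a ∈ U, ∀ b ∈ U, a + b ∈ U) ∧ (∀ (c : L0 Ω μ), ∀ a ∈ U, c • a ∈ U) ∧
    (∀ a ∈ U, ∀ b ∈ U, a * b ∈ U)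
/-- standard algebras of operators: subalgebras containing all finite-generated operators. -/
def IsStandard (U : Set (Module.End (L0 Ω μ) M)) : Prop :=
  IsSubalgebraSet U ∧ ∀ a, FinGenOp a → a ∈ U
/-- the operator `a` is homogeneous of type one: `d(π ⬝ a(M)) = 1` for every nonzero idempotent. -/
def HomogOneOp (a : Module.End (L0 Ω μ) M) : Prop :=
  ∀ π : L0 Ω μ, IsIdem π → π ≠ 0 →
    (∃ g ∈ Set.range a, ∀ x ∈ Set.range a, ∃ c : L0 Ω μ, π • x = c • (π • g)) ∧
    ∃ x ∈ Set.range a, π • x ≠ 0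
end Ops

section DirectSum
variable {I : Type} [DecidableEq I] {X : I → Type*}
  [∀ i, AddCommGroup (X i)] [∀ i, Module (L0 Ω μ) (X i)]
  (K : ∀ i, KHInner Ω μ (X i)) (D : ∀ i, Submodule (L0 Ω μ) (X i))

/-- `D_I`: the submodule of the direct sum consisting of finitely supported tuples. -/
abbrev DI (D : ∀ i, Submodule (L0 Ω μ) (X i)) := Π₀ i, ↥(D i)

/-- the inner product of `X_I` restricted to `D_I`. -/
noncomputable def innerDI (φ ψ : DI D) : L0 Ω μ :=
  letI : ∀ (i : I) (x : ↥(D i)), Decidable (x ≠ 0) := fun _ x => Classical.dec _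
  φ.sum fun i x => (K i).inner (x : X i) ((ψ i : X i))

/-- the canonical copy of an operator on `D i` acting on `D_I`. -/
noncomputable def coordOp (i : I) (b : Module.End (L0 Ω μ) ↥(D i)) :
    Module.End (L0 Ω μ) (DI D) :=
  (DFinsupp.lsingle (R := L0 Ω μ) i).comp (b.comp (DFinsupp.lapply (R := L0 Ω μ) i))

/-- the canonical copy of the rank one operator `φ ⊗ φ`, `φ ∈ D i`, on `D_I`. -/
noncomputable def coordRankOne (i : I) (φ : ↥(D i)) : Module.End (L0 Ω μ) (DI D) :=
  coordOp D i (rankOneE (K i) (D i) φ φ)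

/-- coordinatewise operators `(a_i)` with each `a_i ∈ L⁺(D_i)`: the algebra `L⁺(D_i : i ∈ I)`. -/
def CoordLPlus : Set (Module.End (L0 Ω μ) (DI D)) :=
  {a | ∃ f : ∀ i, Module.End (L0 Ω μ) ↥(D i),
    (∀ i, HasAdjE (K i) (D i) (f i)) ∧ ∀ (φ : DI D) (i : I), a φ i = f i (φ i)}

/-- adjoint pairs on `D_I`. -/
def IsAdjPairDI (a b : Module.End (L0 Ω μ) (DI D)) : Prop :=
  ∀ φ ψ : DI D, innerDI K D (a φ) ψ = innerDI K D φ (b ψ)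

/-- the maximal `O*`-algebra `L⁺(D_I)`. -/
def LPlusDI : Set (Module.End (L0 Ω μ) (DI D)) :=
  {a | ∃ b, IsAdjPairDI K D a b}

/-- `*`-subalgebras of operators on `D_I`. -/
def IsStarSubalgDI (A : Set (Module.End (L0 Ω μ) (DI D))) : Prop :=
  IsSubalgebraSet A ∧ ∀ a ∈ A, ∃ b ∈ A, IsAdjPairDI K D a b

/-- projections on `D_I`: idempotent and self-adjoint. -/
def IsProjDI (p : Module.End (L0 Ω μ) (DI D)) : Prop :=
  p * p = p ∧ IsAdjPairDI K D p p

/-- the range of `p` is concentrated on a single coordinate. -/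
def SingleCoordRange (p : Module.End (L0 Ω μ) (DI D)) : Prop :=
  ∃ i : I, ∀ (φ : DI D) (j : I), j ≠ i → p φ j = 0

/-- `M(A)`: rank one projections in `A` whose range generators have a unique
nonzero coordinate. -/
def MSet (A : Set (Module.End (L0 Ω μ) (DI D))) :
    Set (Module.End (L0 Ω μ) (DI D)) :=
  {p | p ∈ A ∧ IsProjDI K D p ∧ HomogOneOp p ∧ SingleCoordRange D p}

end DirectSum
/-- A Banach–Kantorovich space over `L⁰` with its `L⁰`-module structure. -/
structure BKSpace (Ω : Type) [MeasurableSpace Ω] (μ : Measure Ω)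
    (X : Type*) [AddCommGroup X] [Module (L0 Ω μ) X] where
  nrm : X → L0R Ω μ
  nrm_nonneg : ∀ x, 0 ≤ nrm x
  nrm_eq_zero : ∀ x, nrm x = 0 ↔ x = 0
  nrm_smul : ∀ (c : L0 Ω μ) (x : X), nrm (c • x) = absL c * nrm x
  nrm_triangle : ∀ x y, nrm (x + y) ≤ nrm x + nrm y
  ddecomp : DDecompN nrm
  complete : BOCompleteN nrm

/-!
A homogeneous-of-type-one projection `a` has cyclic range `L⁰ • g` with `a g = g`. Hence each
coordinate `f i` is the self-adjoint map `x ↦ c • g i` with `c ⟨g i, g i⟩ = ⟨x, g i⟩`, which is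
`π_i (φ_i ⊗ φ_i)` for `π_i` the support of `g i` and `φ_i` the vector `g i` normalised on `π_i`
and completed off `π_i` by a unit vector of `D_i`. The supports are disjoint because
`single i (g i)` lies in the range, hence is a multiple of `g`; they exhaust the unit because an
idempotent annihilating every `g i` annihilates the range of `a`, which homogeneity forbids.
-/

lemma ofRealL_ae (r : L0R Ω μ) : ofRealL r =ᵐ[μ] fun ω => (r ω : ℂ) :=
  AEEqFun.coeFn_comp _ _ r

lemma conjL_ae (c : L0 Ω μ) : conjL c =ᵐ[μ] fun ω => starRingEnd ℂ (c ω) :=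
  AEEqFun.coeFn_comp _ _ c

lemma reL_ae (c : L0 Ω μ) : reL c =ᵐ[μ] fun ω => (c ω).re :=
  AEEqFun.coeFn_comp _ _ c

lemma sqrtL_ae (r : L0R Ω μ) : sqrtL r =ᵐ[μ] fun ω => √(r ω) :=
  AEEqFun.coeFn_comp _ _ r

lemma conjL_add (c d : L0 Ω μ) : conjL (c + d) = conjL c + conjL d := by
  apply AEEqFun.ext
  filter_upwards [conjL_ae (c + d), AEEqFun.coeFn_add c d,
    AEEqFun.coeFn_add (conjL c) (conjL d), conjL_ae c, conjL_ae d] with ω h₁ h₂ h₃ h₄ h₅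
  simp [h₁, h₂, h₃, h₄, h₅]

lemma conjL_mul (c d : L0 Ω μ) : conjL (c * d) = conjL c * conjL d := by
  apply AEEqFun.ext
  filter_upwards [conjL_ae (c * d), AEEqFun.coeFn_mul c d,
    AEEqFun.coeFn_mul (conjL c) (conjL d), conjL_ae c, conjL_ae d] with ω h₁ h₂ h₃ h₄ h₅
  simp [h₁, h₂, h₃, h₄, h₅]

lemma conjL_sub (c d : L0 Ω μ) : conjL (c - d) = conjL c - conjL d := by
  rw [eq_sub_iff_add_eq, ← conjL_add, sub_add_cancel]

lemma conjL_one : conjL (1 : L0 Ω μ) = 1 := by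
  apply AEEqFun.ext
  filter_upwards [conjL_ae (1 : L0 Ω μ), AEEqFun.coeFn_one (β := ℂ) (μ := μ)] with ω h₁ h₂
  simp [h₁, h₂]

lemma conjL_ofRealL (r : L0R Ω μ) : conjL (ofRealL r) = ofRealL r := by
  apply AEEqFun.ext
  filter_upwards [conjL_ae (ofRealL r), ofRealL_ae r] with ω h₁ h₂
  simp [h₁, h₂]

lemma ofRealL_one : ofRealL (1 : L0R Ω μ) = 1 := by
  apply AEEqFun.ext
  filter_upwards [ofRealL_ae (1 : L0R Ω μ), AEEqFun.coeFn_one (β := ℝ) (μ := μ),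
    AEEqFun.coeFn_one (β := ℂ) (μ := μ)] with ω h₁ h₂ h₃
  simp [h₁, h₂, h₃]

lemma reL_one : reL (1 : L0 Ω μ) = 1 := by
  apply AEEqFun.ext
  filter_upwards [reL_ae (1 : L0 Ω μ), AEEqFun.coeFn_one (β := ℂ) (μ := μ),
    AEEqFun.coeFn_one (β := ℝ) (μ := μ)] with ω h₁ h₂ h₃
  simp [h₁, h₂, h₃]

lemma sqrtL_eq_one_iff {r : L0R Ω μ} : sqrtL r = 1 ↔ r = 1 := by
  constructor
  · intro hr
    apply AEEqFun.ext
    filter_upwards [AEEqFun.coeFn_one (β := ℝ) (μ := μ), hr ▸ (sqrtL_ae r).symm] with ω h₁ h₂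
    rw [h₁]
    exact Real.sqrt_eq_one.mp (h₂.trans h₁)
  · rintro rfl
    apply AEEqFun.ext
    filter_upwards [sqrtL_ae (1 : L0R Ω μ), AEEqFun.coeFn_one (β := ℝ) (μ := μ)] with ω h₁ h₂
    simp [h₁, h₂]

/-- Pointwise `(√t)⁻¹`; it vanishes where `t ≤ 0`, since `√t = 0` there and `0⁻¹ = 0`. -/
noncomputable def invSqrtL (h : L0R Ω μ) : L0 Ω μ :=
  ofRealL (AEEqFun.compMeasurable (fun t => (√t)⁻¹) (by fun_prop) h)

lemma invSqrtL_ae (h : L0R Ω μ) : invSqrtL h =ᵐ[μ] fun ω => (((√(h ω))⁻¹ : ℝ) : ℂ) := by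
  filter_upwards [ofRealL_ae (AEEqFun.compMeasurable (fun t => (√t)⁻¹) (by fun_prop) h),
    AEEqFun.coeFn_compMeasurable (fun t : ℝ => (√t)⁻¹) (by fun_prop) h] with ω h₁ h₂
  rw [invSqrtL, h₁, h₂]
  rfl

lemma conjL_invSqrtL (h : L0R Ω μ) : conjL (invSqrtL h) = invSqrtL h :=
  conjL_ofRealL _

/-- For `h ≥ 0` this is pointwise the indicator of `{h ≠ 0}`. -/
noncomputable def suppL (h : L0R Ω μ) : L0 Ω μ :=
  invSqrtL h * invSqrtL h * ofRealL h

lemma inv_sqrt_mul_inv_sqrt_mul_self_mul_self {t : ℝ} (ht : 0 ≤ t) :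
    (√t)⁻¹ * (√t)⁻¹ * t * t = t := by
  rcases ht.eq_or_lt with rfl | hpos
  · simp
  · have : √t ≠ 0 := by positivity
    rw [← mul_inv, Real.mul_self_sqrt ht, inv_mul_cancel₀ hpos.ne', one_mul]

lemma inv_sqrt_mul_inv_sqrt_mul_inv_sqrt_mul (t : ℝ) :
    (√t)⁻¹ * ((√t)⁻¹ * (√t)⁻¹ * t) = (√t)⁻¹ := by
  rcases le_or_gt t 0 with ht | hpos
  · simp [Real.sqrt_eq_zero'.mpr ht]
  · have : √t ≠ 0 := by positivity
    rw [← mul_inv, Real.mul_self_sqrt hpos.le, inv_mul_cancel₀ hpos.ne', mul_one]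

lemma suppL_mul_self {h : L0R Ω μ} (h0 : 0 ≤ h) : suppL h * ofRealL h = ofRealL h := by
  apply AEEqFun.ext
  filter_upwards [AEEqFun.coeFn_mul (suppL h) (ofRealL h),
    AEEqFun.coeFn_mul (invSqrtL h * invSqrtL h) (ofRealL h),
    AEEqFun.coeFn_mul (invSqrtL h) (invSqrtL h), invSqrtL_ae h, ofRealL_ae h,
    AEEqFun.coeFn_le.mpr h0, AEEqFun.coeFn_zero (β := ℝ) (μ := μ)] with ω h₁ h₂ h₃ h₄ h₅ h₆ h₇
  rw [h₁, Pi.mul_apply, suppL, h₂, Pi.mul_apply, h₃, Pi.mul_apply, h₄, h₅]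
  rw [h₇] at h₆
  exact_mod_cast inv_sqrt_mul_inv_sqrt_mul_self_mul_self h₆

lemma invSqrtL_mul_suppL (h : L0R Ω μ) : invSqrtL h * suppL h = invSqrtL h := by
  apply AEEqFun.ext
  filter_upwards [AEEqFun.coeFn_mul (invSqrtL h) (suppL h),
    AEEqFun.coeFn_mul (invSqrtL h * invSqrtL h) (ofRealL h),
    AEEqFun.coeFn_mul (invSqrtL h) (invSqrtL h), invSqrtL_ae h, ofRealL_ae h] with ω h₁ h₂ h₃ h₄ h₅
  rw [h₁, Pi.mul_apply, suppL, h₂, Pi.mul_apply, h₃, Pi.mul_apply, h₄, h₅]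
  exact_mod_cast inv_sqrt_mul_inv_sqrt_mul_inv_sqrt_mul (h ω)

lemma suppL_mul_suppL (h : L0R Ω μ) : suppL h * suppL h = suppL h := by
  have h₁ := invSqrtL_mul_suppL h
  unfold suppL at h₁ ⊢
  linear_combination (invSqrtL h * ofRealL h) * h₁

lemma mul_suppL_eq_zero {h : L0R Ω μ} {c : L0 Ω μ} (hc : c * ofRealL h = 0) :
    c * suppL h = 0 := by
  unfold suppL
  linear_combination (invSqrtL h * invSqrtL h) * hc

lemma conjL_suppL (h : L0R Ω μ) : conjL (suppL h) = suppL h := by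
  rw [suppL, conjL_mul, conjL_mul, conjL_invSqrtL, conjL_ofRealL]

namespace KHInner

variable {Y : Type*} [AddCommGroup Y] [Module (L0 Ω μ) Y] (K : KHInner Ω μ Y)

lemma inner_zero_left (y : Y) : K.inner 0 y = 0 := by
  simpa using K.add_left 0 0 y

lemma inner_add_right (x y z : Y) : K.inner x (y + z) = K.inner x y + K.inner x z := by
  rw [K.conj_symm, K.add_left, conjL_add, ← K.conj_symm, ← K.conj_symm]

lemma inner_smul_right (c : L0 Ω μ) (x y : Y) :
    K.inner x (c • y) = conjL c * K.inner x y := by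
  rw [K.conj_symm, K.smul_left, conjL_mul, ← K.conj_symm]

lemma knorm_eq_one_iff {x : Y} : K.knorm x = 1 ↔ K.inner x x = 1 := by
  rw [knorm, sqrtL_eq_one_iff]
  constructor
  · intro h
    rw [K.self_real, h, ofRealL_one]
  · intro h
    rw [h, reL_one]

noncomputable def supp (x : Y) : L0 Ω μ := suppL (reL (K.inner x x))

lemma supp_mul_inner_self (x : Y) : K.supp x * K.inner x x = K.inner x x := by
  have h := suppL_mul_self (K.self_nonneg x)
  rwa [← K.self_real] at h

lemma smul_eq_zero_iff {c : L0 Ω μ} {x : Y} : c • x = 0 ↔ c * K.supp x = 0 := by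
  constructor
  · intro hc
    apply mul_suppL_eq_zero
    rw [← K.self_real, ← K.smul_left, hc, inner_zero_left]
  · intro hc
    have hcx : c * K.inner x x = 0 := by
      rw [← K.supp_mul_inner_self, ← mul_assoc, hc, zero_mul]
    apply K.definite
    rw [K.smul_left, inner_smul_right, mul_left_comm, hcx, mul_zero]

lemma supp_smul_self (x : Y) : K.supp x • x = x := by
  have h : (1 - K.supp x) • x = 0 := by
    rw [K.smul_eq_zero_iff, sub_mul, one_mul, supp, suppL_mul_suppL, sub_self]
  rwa [sub_smul, one_smul, sub_eq_zero, eq_comm] at h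

noncomputable def invNorm (x : Y) : L0 Ω μ := invSqrtL (reL (K.inner x x))

lemma invNorm_mul_invNorm_mul_inner_self (x : Y) :
    K.invNorm x * K.invNorm x * K.inner x x = K.supp x := by
  rw [supp, suppL, ← K.self_real, invNorm]

lemma invNorm_mul_supp (x : Y) : K.invNorm x * K.supp x = K.invNorm x :=
  invSqrtL_mul_suppL _

/-- `x` rescaled to norm one on its support and completed by `e` off it. -/
noncomputable def normalize (x e : Y) : Y := K.invNorm x • x + (1 - K.supp x) • e

lemma inner_normalize_self {x e : Y} (he : K.inner e e = 1) :
    K.inner (K.normalize x e) (K.normalize x e) = 1 := by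
  have hsupp := K.invNorm_mul_invNorm_mul_inner_self x
  have hinv := K.invNorm_mul_supp x
  have hidem : K.supp x * K.supp x = K.supp x := suppL_mul_suppL _
  simp only [normalize, K.add_left, K.smul_left, K.inner_add_right, K.inner_smul_right,
    conjL_sub, conjL_one, invNorm, conjL_invSqrtL, supp, conjL_suppL, he] at hsupp hinv hidem ⊢
  linear_combination hsupp - (K.inner x e + K.inner e x) * hinv + hidem

lemma supp_mul_inner_normalize (x e y : Y) :
    K.supp x * K.inner y (K.normalize x e) = K.invNorm x * K.inner y x := by
  have hinv := K.invNorm_mul_supp x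
  have hidem : K.supp x * K.supp x = K.supp x := suppL_mul_suppL _
  simp only [normalize, K.inner_add_right, K.inner_smul_right, conjL_sub, conjL_one, invNorm,
    conjL_invSqrtL, supp, conjL_suppL] at hinv hidem ⊢
  linear_combination K.inner y x * hinv - K.inner y e * hidem

lemma invNorm_mul_smul_normalize (c : L0 Ω μ) (x e : Y) :
    (K.invNorm x * (c * K.inner x x)) • K.normalize x e = c • x := by
  have hsupp := K.invNorm_mul_invNorm_mul_inner_self x
  have hinv := K.invNorm_mul_supp x
  have hvanish : K.invNorm x * (c * K.inner x x) * (1 - K.supp x) = 0 := by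
    linear_combination (-(c * K.inner x x)) * hinv
  have hcoeff : K.invNorm x * (c * K.inner x x) * K.invNorm x = c * K.supp x := by
    linear_combination c * hsupp
  rw [normalize, smul_add, smul_smul, smul_smul, hvanish, zero_smul, add_zero, hcoeff,
    mul_smul, K.supp_smul_self]

theorem exists_eq_supp_smul_rankOneE (D : Submodule (L0 Ω μ) Y) {e : D}
    (he : K.knorm (e : Y) = 1) {f : Module.End (L0 Ω μ) D} {g : D}
    (hsa : ∀ x y : D, K.inner (f x : Y) y = K.inner (x : Y) (f y)) (hfix : f g = g)
    (hrange : ∀ x, ∃ c : L0 Ω μ, f x = c • g) :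
    ∃ φ : D, K.knorm (φ : Y) = 1 ∧ f = K.supp (g : Y) • rankOneE K D φ φ := by
  have hmem : K.normalize g e ∈ D := D.add_mem (D.smul_mem _ g.2) (D.smul_mem _ e.2)
  refine ⟨⟨_, hmem⟩, K.knorm_eq_one_iff.mpr
    (K.inner_normalize_self (K.knorm_eq_one_iff.mp he)), LinearMap.ext fun x => ?_⟩
  obtain ⟨c, hc⟩ := hrange x
  have hcg : K.inner (x : Y) g = c * K.inner (g : Y) g := by
    rw [← K.smul_left, ← Submodule.coe_smul, ← hc, hsa, hfix]
  apply Subtype.ext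
  calc (f x : Y) = c • (g : Y) := by rw [hc, Submodule.coe_smul]
    _ = (K.supp g * K.inner (x : Y) (K.normalize g e)) • K.normalize g e := by
      rw [K.supp_mul_inner_normalize, hcg, K.invNorm_mul_smul_normalize]
    _ = _ := by rw [← smul_smul]; rfl

end KHInner

lemma HomogOneOp.exists_fixed_generator {M : Type*} [AddCommGroup M] [Module (L0 Ω μ) M]
    {a : Module.End (L0 Ω μ) M} (hidem : a * a = a) (hone : HomogOneOp a) :
    ∃ g, a g = g ∧ ∀ x ∈ Set.range a, ∃ c : L0 Ω μ, x = c • g := by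
  by_cases htriv : (1 : L0 Ω μ) = 0
  · have : Subsingleton (L0 Ω μ) := subsingleton_of_zero_eq_one htriv.symm
    have : Subsingleton M := Module.subsingleton (L0 Ω μ) M
    exact ⟨0, Subsingleton.elim _ _, fun x _ => ⟨0, Subsingleton.elim _ _⟩⟩
  obtain ⟨⟨g, ⟨y, rfl⟩, hgen⟩, -⟩ := hone 1 (mul_one 1) htriv
  refine ⟨a y, by rw [← Module.End.mul_apply, hidem], fun x hx => ?_⟩
  simpa only [one_smul] using hgen x hx

section DirectSum

variable {I : Type} [DecidableEq I] {X : I → Type*} [∀ i, AddCommGroup (X i)]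
  [∀ i, Module (L0 Ω μ) (X i)] {K : ∀ i, KHInner Ω μ (X i)} {D : ∀ i, Submodule (L0 Ω μ) (X i)}

lemma innerDI_single (i : I) (u v : D i) :
    innerDI K D (DFinsupp.single i u) (DFinsupp.single i v) = (K i).inner (u : X i) v := by
  -- the decidability instance built into `innerDI`
  let _ : ∀ (i : I) (x : D i), Decidable (x ≠ 0) := fun _ x => Classical.dec _
  unfold innerDI
  rw [DFinsupp.sum_single_index (by rw [ZeroMemClass.coe_zero, KHInner.inner_zero_left]),
    DFinsupp.single_eq_same]

lemma apply_single_of_coord {a : Module.End (L0 Ω μ) (DI D)} {f : ∀ i, Module.End (L0 Ω μ) (D i)}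
    (hcoord : ∀ (φ : DI D) (i : I), a φ i = f i (φ i)) (i : I) (x : D i) :
    a (DFinsupp.single i x) = DFinsupp.single i (f i x) := by
  ext j
  rw [hcoord]
  rcases eq_or_ne j i with rfl | hj
  · rw [DFinsupp.single_eq_same, DFinsupp.single_eq_same]
  · rw [DFinsupp.single_eq_of_ne hj, DFinsupp.single_eq_of_ne hj, map_zero]

lemma isPartition_supp {a : Module.End (L0 Ω μ) (DI D)} (hone : HomogOneOp a) {g : DI D}
    (hgen : ∀ x ∈ Set.range a, ∃ c : L0 Ω μ, x = c • g)
    (hsingle : ∀ i, DFinsupp.single i (g i) ∈ Set.range a) :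
    IsPartition fun i => (K i).supp (g i : X i) := by
  have hsmul_eq_zero : ∀ {i} {c : L0 Ω μ}, c • g i = 0 ↔ c * (K i).supp (g i : X i) = 0 :=
    fun {i c} => by rw [← (K i).smul_eq_zero_iff, ← Submodule.coe_smul, ZeroMemClass.coe_eq_zero]
  refine ⟨fun i => suppL_mul_suppL _, fun i j hij => ?_, fun e he horth => ?_⟩
  · obtain ⟨c, hc⟩ := hgen _ (hsingle i)
    have hj : c * (K j).supp (g j : X j) = 0 := by
      rw [← hsmul_eq_zero, ← DFinsupp.smul_apply, ← hc, DFinsupp.single_eq_of_ne hij.symm]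
    have hi : (c - 1) * (K i).supp (g i : X i) = 0 := by
      rw [← hsmul_eq_zero, sub_smul, one_smul, ← DFinsupp.smul_apply, ← hc,
        DFinsupp.single_eq_same, sub_self]
    linear_combination (K i).supp (g i : X i) * hj - (K j).supp (g j : X j) * hi
  · by_contra hne
    obtain ⟨x, hx, hex⟩ := (hone e he hne).2
    obtain ⟨c, rfl⟩ := hgen x hx
    have heg : e • g = 0 := by
      refine DFinsupp.ext fun j => ?_
      rw [DFinsupp.smul_apply, DFinsupp.zero_apply, hsmul_eq_zero, mul_comm, horth]
    exact hex (by rw [smul_comm, heg, smul_zero])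

end DirectSum

theorem statement12_general {I : Type} [DecidableEq I] {X : I → Type*} [∀ i, AddCommGroup (X i)]
    [∀ i, Module (L0 Ω μ) (X i)] (K : ∀ i, KHInner Ω μ (X i))
    (D : ∀ i, Submodule (L0 Ω μ) (X i))
    (hunit : ∀ i, ∃ e : ↥(D i), (K i).knorm (e : X i) = 1)
    (a : Module.End (L0 Ω μ) (DI D)) (f : ∀ i, Module.End (L0 Ω μ) ↥(D i))
    (hcoord : ∀ (φ : DI D) (i : I), a φ i = f i (φ i))
    (hproj : IsProjDI K D a) (hone : HomogOneOp a) :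
    ∃ (πp : I → L0 Ω μ) (φu : ∀ i, ↥(D i)),
      IsPartition πp ∧ (∀ i, (K i).knorm (φu i : X i) = 1) ∧
      ∀ i, f i = πp i • rankOneE (K i) (D i) (φu i) (φu i) := by
  obtain ⟨g, hfix, hgen⟩ := hone.exists_fixed_generator hproj.1
  have hsingle := apply_single_of_coord hcoord
  have hfix_coord : ∀ i, f i (g i) = g i := fun i => by rw [← hcoord, hfix]
  have hrange : ∀ i x, ∃ c : L0 Ω μ, f i x = c • g i := fun i x => by
    obtain ⟨c, hc⟩ := hgen _ ⟨DFinsupp.single i x, rfl⟩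
    refine ⟨c, ?_⟩
    simpa only [hsingle, DFinsupp.single_eq_same, DFinsupp.smul_apply] using
      DFunLike.congr_fun hc i
  have hsa : ∀ i (x y : D i), (K i).inner (f i x : X i) y = (K i).inner (x : X i) (f i y) :=
    fun i x y => by
      simpa only [hsingle, innerDI_single] using hproj.2 (DFinsupp.single i x) (DFinsupp.single i y)
  choose φ hφ hfφ using fun i => (K i).exists_eq_supp_smul_rankOneE (D i)
    (hunit i).choose_spec (hsa i) (hfix_coord i) (hrange i)
  exact ⟨_, φ, isPartition_supp hone hgen fun i => ⟨_, by rw [hsingle, hfix_coord]⟩, hφ, hfφ⟩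

/-- Every homogeneous-of-type-one `L⁰`-linear projection in
`L⁺(D_i : i ∈ I)` is of the form `(o)-∑_{i∈I} π_i (φ_i ⊗ φ_i)` for a partition
`(π_i)` of the unit in `∇` and unit vectors `φ_i ∈ D_i`. -/
theorem statement12 {I : Type} [DecidableEq I] {X : I → Type*} [∀ i, AddCommGroup (X i)]
    [∀ i, Module (L0 Ω μ) (X i)] (K : ∀ i, KHInner Ω μ (X i)) (hK : ∀ i, (K i).IsKH)
    (D : ∀ i, Submodule (L0 Ω μ) (X i))
    (hdense : ∀ i, BODenseN (K i).knorm ((D i) : Set (X i)))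
    (hunit : ∀ i, ∃ e : ↥(D i), (K i).knorm (e : X i) = 1)
    (a : Module.End (L0 Ω μ) (DI D)) (f : ∀ i, Module.End (L0 Ω μ) ↥(D i))
    (hadj : ∀ i, HasAdjE (K i) (D i) (f i))
    (hcoord : ∀ (φ : DI D) (i : I), a φ i = f i (φ i))
    (hproj : IsProjDI K D a) (hone : HomogOneOp a) :
    ∃ (πp : I → L0 Ω μ) (φu : ∀ i, ↥(D i)),
      IsPartition πp ∧ (∀ i, (K i).knorm (φu i : X i) = 1) ∧
      ∀ i, f i = πp i • rankOneE (K i) (D i) (φu i) (φu i) :=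
  statement12_general K D hunit a f hcoord hproj hone

end KHPaper
end

section
/- Let X be a Kaplansky–Hilbert module over L^0. Then for every L^0-bounded L^0-linear functional f: X → L^0 there exists a unique ψ ∈ X such that f(φ) = ⟨φ,ψ⟩ for all φ ∈ X. -/
open MeasureTheory

namespace KHPaper

variable {Ω : Type} [MeasurableSpace Ω] {μ : Measure Ω}

/-!
The representative is the minimiser of the energy `E x = ‖x‖² - 2 Re f(x)`, which is bounded
below by `-c²`. Gluing two vectors along the idempotent of `{E x ≤ E x'}` realises
`E x ⊓ E x'`, so the pairs `(q, b)` of a value bound `E x ≤ q` and a lower bound `b ≤ E` form a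
directed set. By the parallelogram law the chosen points satisfy `‖x - y‖² ≤ 4 (q - b)`, and the
gaps `q - b` have infimum zero, since otherwise a lower bound could be raised indefinitely; hence
the points form a (bo)-Cauchy net. Its limit `ψ` minimises `E`, and the first variation of `E`
at `ψ` gives `f φ = ⟨φ, ψ⟩`.
-/

open ComplexConjugate

section Pointwise

variable {γ : Type*} [TopologicalSpace γ]

lemma ae_add_apply [Add γ] [ContinuousAdd γ] (a b : Ω →ₘ[μ] γ) :
    ∀ᵐ ω ∂μ, (a + b) ω = a ω + b ω :=
  AEEqFun.coeFn_add a b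

lemma ae_sub_apply [AddGroup γ] [IsTopologicalAddGroup γ] (a b : Ω →ₘ[μ] γ) :
    ∀ᵐ ω ∂μ, (a - b) ω = a ω - b ω :=
  AEEqFun.coeFn_sub a b

lemma ae_neg_apply [AddGroup γ] [IsTopologicalAddGroup γ] (a : Ω →ₘ[μ] γ) :
    ∀ᵐ ω ∂μ, (-a) ω = -a ω :=
  AEEqFun.coeFn_neg a

lemma ae_mul_apply [Mul γ] [ContinuousMul γ] (a b : Ω →ₘ[μ] γ) :
    ∀ᵐ ω ∂μ, (a * b) ω = a ω * b ω :=
  AEEqFun.coeFn_mul a b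

lemma ae_smul_apply {𝕜 : Type*} [SMul 𝕜 γ] [ContinuousConstSMul 𝕜 γ] (r : 𝕜) (a : Ω →ₘ[μ] γ) :
    ∀ᵐ ω ∂μ, (r • a) ω = r • a ω :=
  AEEqFun.coeFn_smul r a

lemma ae_zero_apply [Zero γ] : ∀ᵐ ω ∂μ, (0 : Ω →ₘ[μ] γ) ω = 0 :=
  AEEqFun.coeFn_zero

lemma ae_one_apply [One γ] : ∀ᵐ ω ∂μ, (1 : Ω →ₘ[μ] γ) ω = 1 :=
  AEEqFun.coeFn_one

lemma ae_sup_apply [Lattice γ] [TopologicalLattice γ] (a b : Ω →ₘ[μ] γ) :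
    ∀ᵐ ω ∂μ, (a ⊔ b) ω = a ω ⊔ b ω :=
  AEEqFun.coeFn_sup a b

lemma ae_reL_apply (a : L0 Ω μ) : ∀ᵐ ω ∂μ, reL a ω = (a ω).re :=
  AEEqFun.coeFn_comp _ _ a

lemma ae_absL_apply (a : L0 Ω μ) : ∀ᵐ ω ∂μ, absL a ω = ‖a ω‖ :=
  AEEqFun.coeFn_comp _ _ a

lemma ae_conjL_apply (a : L0 Ω μ) : ∀ᵐ ω ∂μ, conjL a ω = conj (a ω) :=
  AEEqFun.coeFn_comp _ _ a

lemma ae_sqrtL_apply (a : L0R Ω μ) : ∀ᵐ ω ∂μ, sqrtL a ω = √(a ω) :=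
  AEEqFun.coeFn_comp _ _ a

lemma le_iff_ae {a b : L0R Ω μ} : a ≤ b ↔ ∀ᵐ ω ∂μ, a ω ≤ b ω :=
  AEEqFun.coeFn_le.symm

lemma nonneg_iff_ae {a : L0R Ω μ} : 0 ≤ a ↔ ∀ᵐ ω ∂μ, 0 ≤ a ω := by
  rw [le_iff_ae]
  exact Filter.eventually_congr (ae_zero_apply.mono fun _ h => by rw [h])

lemma ae_constL_apply (c : ℂ) : ∀ᵐ ω ∂μ, constL Ω μ c ω = c :=
  AEEqFun.coeFn_const Ω c

end Pointwise

instance : IsOrderedAddMonoid (L0R Ω μ) where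
  add_le_add_left a b h c := by
    rw [le_iff_ae] at h ⊢
    filter_upwards [h, ae_add_apply a c, ae_add_apply b c] with ω hω h₁ h₂
    rw [h₁, h₂]
    linarith

lemma le_zero_of_forall_add_nsmul_le {a b h : L0R Ω μ} (H : ∀ n : ℕ, a + n • h ≤ b) :
    h ≤ 0 := by
  have hn : ∀ n : ℕ, ∀ᵐ ω ∂μ, a ω + n * h ω ≤ b ω := fun n => by
    filter_upwards [le_iff_ae.mp (H n), ae_add_apply a (n • h), ae_smul_apply n h]
      with ω h₁ h₂ h₃
    rwa [h₂, h₃, nsmul_eq_mul] at h₁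
  rw [le_iff_ae]
  filter_upwards [ae_all_iff.mpr hn, ae_zero_apply (γ := ℝ) (μ := μ)] with ω hω h₀
  rw [h₀]
  by_contra! hpos
  obtain ⟨n, hn⟩ := exists_nat_gt ((b ω - a ω) / h ω)
  rw [div_lt_iff₀ hpos] at hn
  linarith [hω n]

lemma InfZero.le_zero_of_forall_le_mul {ι : Type*} {e : ι → L0R Ω μ} (he : InfZero e)
    {a D : L0R Ω μ} (hD : 0 ≤ D) (h : ∀ i, a ≤ D * e i) : a ≤ 0 := by
  have hcont : Continuous fun r : ℝ => (|r| + 1)⁻¹ :=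
    (continuous_abs.add continuous_const).inv₀ fun r => (by positivity : (0 : ℝ) < |r| + 1).ne'
  set w := D.comp _ hcont
  have hw : ∀ᵐ ω ∂μ, (a * w) ω = a ω * (D ω + 1)⁻¹ := by
    filter_upwards [ae_mul_apply a w, AEEqFun.coeFn_comp _ hcont D, nonneg_iff_ae.mp hD]
      with ω h₁ h₂ h₃
    rw [h₁, h₂, Function.comp_apply, abs_of_nonneg h₃]
  have haw : a * w ≤ 0 := he.2 _ fun i => by
    rw [le_iff_ae]
    filter_upwards [hw, le_iff_ae.mp (h i), ae_mul_apply D (e i), nonneg_iff_ae.mp hD,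
      nonneg_iff_ae.mp (he.1 i)] with ω h₁ h₂ h₃ h₄ h₅
    rw [h₁, inv_eq_one_div, mul_one_div, div_le_iff₀ (by positivity)]
    rw [h₃] at h₂
    nlinarith
  rw [le_iff_ae]
  filter_upwards [hw, le_iff_ae.mp haw, ae_zero_apply (γ := ℝ) (μ := μ),
    nonneg_iff_ae.mp hD] with ω h₁ h₂ h₃ h₄
  rw [h₁, h₃] at h₂
  rw [h₃]
  exact nonpos_of_mul_nonpos_left h₂ (by positivity)

lemma discrim_le_zero_of_forall_rat {a b c : ℝ} (h : ∀ q : ℚ, 0 ≤ a * (q * q) + b * q + c) :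
    discrim a b c ≤ 0 :=
  discrim_le_zero fun x => Rat.denseRange_cast.induction_on x
    (isClosed_le continuous_const (by fun_prop)) h

/-- Only the countably many test functions `s = q • conj v`, `q : ℚ`, are used, so that the
resulting inequalities hold simultaneously almost everywhere. -/
lemma ae_normSq_mul_self_le {v : L0 Ω μ} {B C : Ω → ℝ}
    (h : ∀ s : L0 Ω μ, ∀ᵐ ω ∂μ,
      0 ≤ C ω + 2 * (s ω * v ω).re + Complex.normSq (s ω) * B ω) :
    ∀ᵐ ω ∂μ, Complex.normSq (v ω) * Complex.normSq (v ω) ≤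
      Complex.normSq (v ω) * B ω * C ω := by
  have hq : ∀ q : ℚ, ∀ᵐ ω ∂μ, 0 ≤ Complex.normSq (v ω) * B ω * (q * q) +
      2 * Complex.normSq (v ω) * q + C ω := by
    intro q
    filter_upwards [h (constL Ω μ q * conjL v), ae_mul_apply (constL Ω μ q) (conjL v),
      ae_constL_apply (μ := μ) (q : ℂ), ae_conjL_apply v] with ω hω h₁ h₂ h₃
    rw [h₁, h₂, h₃] at hω
    have hre : ((q : ℂ) * conj (v ω) * v ω).re = q * Complex.normSq (v ω) := by
      rw [mul_assoc, ← Complex.normSq_eq_conj_mul_self, ← Complex.ofReal_ratCast,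
        ← Complex.ofReal_mul, Complex.ofReal_re]
    rw [hre, Complex.normSq_mul, Complex.normSq_conj, ← Complex.ofReal_ratCast,
      Complex.normSq_ofReal] at hω
    linarith
  filter_upwards [ae_all_iff.mpr hq] with ω hω
  have := discrim_le_zero_of_forall_rat hω
  rw [discrim] at this
  linarith

namespace KHInner

variable {X : Type*} [AddCommGroup X] [Module (L0 Ω μ) X] (K : KHInner Ω μ X)

lemma inner_sub_left (x y z : X) : K.inner (x - y) z = K.inner x z - K.inner y z :=
  (AddMonoidHom.mk' (K.inner · z) fun a b => K.add_left a b z).map_sub x y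

lemma inner_zero_left_s19 (z : X) : K.inner 0 z = 0 :=
  (AddMonoidHom.mk' (K.inner · z) fun a b => K.add_left a b z).map_zero

lemma ae_inner_eq_conj (x y : X) : ∀ᵐ ω ∂μ, K.inner x y ω = conj (K.inner y x ω) := by
  rw [K.conj_symm x y]
  exact ae_conjL_apply _

lemma ae_re_inner_self_nonneg (x : X) : ∀ᵐ ω ∂μ, 0 ≤ (K.inner x x ω).re := by
  filter_upwards [nonneg_iff_ae.mp (K.self_nonneg x), ae_reL_apply (K.inner x x)] with ω h h'
  rwa [h'] at h

lemma ae_knorm_eq_sqrt (x : X) : ∀ᵐ ω ∂μ, K.knorm x ω = √(K.inner x x ω).re := by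
  filter_upwards [ae_sqrtL_apply (reL (K.inner x x)), ae_reL_apply (K.inner x x)] with ω h h'
  rw [knorm, h, h']

lemma ae_knorm_nonneg (x : X) : ∀ᵐ ω ∂μ, 0 ≤ K.knorm x ω :=
  (K.ae_knorm_eq_sqrt x).mono fun _ h => h ▸ Real.sqrt_nonneg _

lemma ae_knorm_sq (x : X) : ∀ᵐ ω ∂μ, K.knorm x ω ^ 2 = (K.inner x x ω).re := by
  filter_upwards [K.ae_knorm_eq_sqrt x, K.ae_re_inner_self_nonneg x] with ω h h'
  rw [h, Real.sq_sqrt h']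

lemma ae_re_inner_add_smul_self (x y : X) (s : L0 Ω μ) :
    ∀ᵐ ω ∂μ, (K.inner (x + s • y) (x + s • y) ω).re =
      (K.inner x x ω).re + 2 * (s ω * K.inner y x ω).re +
        Complex.normSq (s ω) * (K.inner y y ω).re := by
  set v := x + s • y
  have hv : K.inner v v = K.inner x v + s * K.inner y v := by rw [K.add_left, K.smul_left]
  have hvx : K.inner v x = K.inner x x + s * K.inner y x := by rw [K.add_left, K.smul_left]
  have hvy : K.inner v y = K.inner x y + s * K.inner y y := by rw [K.add_left, K.smul_left]
  filter_upwards [ae_add_apply (K.inner x v) (s * K.inner y v), ae_mul_apply s (K.inner y v),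
    ae_add_apply (K.inner x x) (s * K.inner y x), ae_mul_apply s (K.inner y x),
    ae_add_apply (K.inner x y) (s * K.inner y y), ae_mul_apply s (K.inner y y),
    K.ae_inner_eq_conj x v, K.ae_inner_eq_conj y v, K.ae_inner_eq_conj x y]
    with ω h₁ h₂ h₃ h₄ h₅ h₆ hxv hyv hxy
  rw [hv, h₁, h₂, hxv, hyv, hvx, hvy, h₃, h₄, h₅, h₆, hxy]
  simp only [map_add, map_mul, Complex.conj_conj, Complex.add_re, Complex.add_im,
    Complex.mul_re, Complex.mul_im, Complex.conj_re, Complex.conj_im, Complex.normSq_apply]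
  ring

lemma ae_norm_inner_le (x y : X) :
    ∀ᵐ ω ∂μ, ‖K.inner x y ω‖ ≤ K.knorm x ω * K.knorm y ω := by
  have hquad := ae_normSq_mul_self_le (v := K.inner x y) (B := fun ω => (K.inner x x ω).re)
    (C := fun ω => (K.inner y y ω).re) fun s => by
      filter_upwards [K.ae_re_inner_add_smul_self y x s, K.ae_re_inner_self_nonneg (y + s • x)]
        with ω h h₀
      rwa [h] at h₀
  filter_upwards [hquad, K.ae_knorm_eq_sqrt x, K.ae_knorm_eq_sqrt y,
    K.ae_re_inner_self_nonneg x, K.ae_re_inner_self_nonneg y] with ω hω hx hy hx₀ hy₀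
  rw [hx, hy, ← Real.sqrt_mul hx₀, Complex.norm_def]
  refine Real.sqrt_le_sqrt ?_
  rcases (Complex.normSq_nonneg (K.inner x y ω)).eq_or_lt with h₀ | h₀
  · rw [← h₀]
    exact mul_nonneg hx₀ hy₀
  · nlinarith

lemma eq_of_forall_inner_eq {ψ ψ' : X}
    (h : ∀ φ, K.inner φ ψ = K.inner φ ψ') : ψ = ψ' := by
  rw [← sub_eq_zero]
  apply K.definite
  rw [K.inner_sub_left, K.conj_symm ψ, K.conj_symm ψ', h, sub_self]

end KHInner

section Energy

variable {X : Type*} [AddCommGroup X] [Module (L0 Ω μ) X] (K : KHInner Ω μ X)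
  (f : X →ₗ[L0 Ω μ] L0 Ω μ)

noncomputable def rieszEnergy (x : X) : L0R Ω μ :=
  reL (K.inner x x) - (2 : ℝ) • reL (f x)

lemma ae_rieszEnergy_apply (x : X) :
    ∀ᵐ ω ∂μ, rieszEnergy K f x ω = (K.inner x x ω).re - 2 * (f x ω).re := by
  filter_upwards [ae_sub_apply (reL (K.inner x x)) ((2 : ℝ) • reL (f x)),
    ae_smul_apply (2 : ℝ) (reL (f x)), ae_reL_apply (K.inner x x), ae_reL_apply (f x)]
    with ω h₁ h₂ h₃ h₄
  rw [rieszEnergy, h₁, h₂, h₃, h₄, smul_eq_mul]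

lemma rieszEnergy_zero : rieszEnergy K f 0 = 0 := by
  apply AEEqFun.ext
  filter_upwards [ae_rieszEnergy_apply K f 0, ae_zero_apply (γ := ℝ) (μ := μ),
    ae_zero_apply (γ := ℂ) (μ := μ)] with ω h h₀ h₀'
  rw [h, h₀, K.inner_zero_left_s19, map_zero, h₀']
  simp

lemma ae_rieszEnergy_add_smul (x y : X) (s : L0 Ω μ) :
    ∀ᵐ ω ∂μ, rieszEnergy K f (x + s • y) ω = rieszEnergy K f x ω +
      2 * (s ω * (K.inner y x ω - f y ω)).re + Complex.normSq (s ω) * (K.inner y y ω).re := by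
  have hf : f (x + s • y) = f x + s * f y := by rw [map_add, map_smul, smul_eq_mul]
  filter_upwards [ae_rieszEnergy_apply K f (x + s • y), ae_rieszEnergy_apply K f x,
    K.ae_re_inner_add_smul_self x y s, ae_add_apply (f x) (s * f y), ae_mul_apply s (f y)]
    with ω h₁ h₂ h₃ h₄ h₅
  rw [h₁, h₂, h₃, hf, h₄, h₅]
  simp only [Complex.add_re, Complex.mul_re, Complex.sub_re, Complex.sub_im]
  ring

lemma knorm_sub_le_of_rieszEnergy_le {b q : L0R Ω μ} (hb : ∀ y, b ≤ rieszEnergy K f y)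
    {x y : X} (hx : rieszEnergy K f x ≤ q) (hy : rieszEnergy K f y ≤ q) :
    K.knorm (x - y) ≤ (2 : ℝ) • sqrtL (q - b) := by
  have hx' : y + (1 : L0 Ω μ) • (x - y) = x := by rw [one_smul, add_sub_cancel]
  set m := y + constL Ω μ ((1 / 2 : ℝ) : ℂ) • (x - y)
  rw [le_iff_ae]
  filter_upwards [hx' ▸ ae_rieszEnergy_add_smul K f y (x - y) 1,
    ae_rieszEnergy_add_smul K f y (x - y) (constL Ω μ ((1 / 2 : ℝ) : ℂ)),
    ae_one_apply (γ := ℂ) (μ := μ), ae_constL_apply (μ := μ) ((1 / 2 : ℝ) : ℂ),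
    le_iff_ae.mp hx, le_iff_ae.mp hy, le_iff_ae.mp (hb m), K.ae_knorm_eq_sqrt (x - y),
    ae_smul_apply (2 : ℝ) (sqrtL (q - b)), ae_sqrtL_apply (q - b), ae_sub_apply q b]
    with ω hEx hEm h₁ hhalf hxq hyq hbm hd h₂ h₃ h₄
  -- parallelogram law: `‖x - y‖² = 2 E x + 2 E y - 4 E m`
  rw [h₁, Complex.normSq_one, one_mul] at hEx
  rw [hhalf, Complex.normSq_ofReal, Complex.re_ofReal_mul] at hEm
  rw [hd, h₂, h₃, h₄, smul_eq_mul, ← Real.sqrt_sq zero_le_two, ← Real.sqrt_mul (sq_nonneg 2)]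
  exact Real.sqrt_le_sqrt (by linarith)

lemma directed_rieszEnergy : Directed (· ≥ ·) (rieszEnergy K f) := by
  intro x x'
  have hmeas : Measurable ((Set.Iic (0 : ℝ)).indicator (1 : ℝ → ℂ)) :=
    measurable_const.indicator measurableSet_Iic
  set π : L0 Ω μ := (rieszEnergy K f x - rieszEnergy K f x').compMeasurable _ hmeas
  have hx : x' + (1 : L0 Ω μ) • (x - x') = x := by rw [one_smul, add_sub_cancel]
  refine ⟨x' + π • (x - x'), ?_⟩
  suffices h : ∀ᵐ ω ∂μ, rieszEnergy K f (x' + π • (x - x')) ω =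
      min (rieszEnergy K f x ω) (rieszEnergy K f x' ω) by
    constructor <;> refine le_iff_ae.mpr (h.mono fun ω hω => ?_) <;> rw [hω]
    exacts [min_le_left _ _, min_le_right _ _]
  filter_upwards [ae_rieszEnergy_add_smul K f x' (x - x') π,
    hx ▸ ae_rieszEnergy_add_smul K f x' (x - x') 1, ae_one_apply (γ := ℂ) (μ := μ),
    AEEqFun.coeFn_compMeasurable _ hmeas (rieszEnergy K f x - rieszEnergy K f x'),
    ae_sub_apply (rieszEnergy K f x) (rieszEnergy K f x')] with ω hπ hone h₁ hind hsub
  rw [h₁, Complex.normSq_one, one_mul, one_mul] at hone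
  rw [hπ, hind, Function.comp_apply, hsub]
  by_cases hle : rieszEnergy K f x ω ≤ rieszEnergy K f x' ω
  · rw [Set.indicator_of_mem (Set.mem_Iic.mpr (sub_nonpos.mpr hle)), Pi.one_apply,
      Complex.normSq_one, one_mul, one_mul, ← hone, min_eq_left hle]
  · rw [Set.indicator_of_notMem fun h => hle (sub_nonpos.mp (Set.mem_Iic.mp h)),
      Complex.normSq_zero, zero_mul, Complex.zero_re, mul_zero, add_zero, zero_mul, add_zero,
      min_eq_right (not_le.mp hle).le]

lemma eq_inner_of_forall_rieszEnergy_le {ψ : X} (hψ : ∀ y, rieszEnergy K f ψ ≤ rieszEnergy K f y)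
    (φ : X) : f φ = K.inner φ ψ := by
  set w := K.inner φ ψ - f φ
  have hquad := ae_normSq_mul_self_le (v := w) (B := fun ω => (K.inner φ φ ω).re)
    (C := fun _ => 0) fun s => by
      filter_upwards [ae_rieszEnergy_add_smul K f ψ φ s, le_iff_ae.mp (hψ (ψ + s • φ)),
        ae_sub_apply (K.inner φ ψ) (f φ)] with ω h hle hw
      rw [hw]
      linarith
  rw [eq_comm, ← sub_eq_zero]
  apply AEEqFun.ext
  filter_upwards [hquad, ae_zero_apply (γ := ℂ) (μ := μ)] with ω hω h₀
  rw [h₀, ← Complex.normSq_eq_zero]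
  nlinarith [Complex.normSq_nonneg (w ω)]

end Energy

section Bounded

variable {X : Type*} [AddCommGroup X] [Module (L0 Ω μ) X] {K : KHInner Ω μ X}
  {f : X →ₗ[L0 Ω μ] L0 Ω μ} {c : L0R Ω μ}

lemma ae_re_apply_le (hc : ∀ x, absL (f x) ≤ c * K.knorm x) (x : X) :
    ∀ᵐ ω ∂μ, |(f x ω).re| ≤ c ω * K.knorm x ω := by
  filter_upwards [le_iff_ae.mp (hc x), ae_absL_apply (f x), ae_mul_apply c (K.knorm x)]
    with ω h h₁ h₂
  rw [h₁, h₂] at h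
  exact (Complex.abs_re_le_norm _).trans h

lemma neg_mul_self_le_rieszEnergy (hc : ∀ x, absL (f x) ≤ c * K.knorm x) (y : X) :
    -(c * c) ≤ rieszEnergy K f y := by
  rw [le_iff_ae]
  filter_upwards [ae_re_apply_le hc y, ae_rieszEnergy_apply K f y, K.ae_knorm_sq y,
    ae_neg_apply (c * c), ae_mul_apply c c] with ω hf hE hk h₁ h₂
  rw [hE, ← hk, h₁, h₂]
  nlinarith [abs_le.mp hf, sq_nonneg (K.knorm y ω - c ω)]

lemma ae_knorm_le_of_rieszEnergy_nonpos (hc : ∀ x, absL (f x) ≤ c * K.knorm x) (hc₀ : 0 ≤ c)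
    {z : X} (hz : rieszEnergy K f z ≤ 0) :
    ∀ᵐ ω ∂μ, K.knorm z ω ≤ 2 * c ω := by
  filter_upwards [le_iff_ae.mp hz, ae_zero_apply (γ := ℝ) (μ := μ), ae_re_apply_le hc z,
    ae_rieszEnergy_apply K f z, K.ae_knorm_sq z, K.ae_knorm_nonneg z, nonneg_iff_ae.mp hc₀]
    with ω hE h₀ hf hE' hk hk₀ hc₀ω
  rw [h₀, hE', ← hk] at hE
  nlinarith [abs_le.mp hf]

lemma ae_rieszEnergy_le_add (hc : ∀ x, absL (f x) ≤ c * K.knorm x) (y z : X) :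
    ∀ᵐ ω ∂μ, rieszEnergy K f y ω ≤ rieszEnergy K f z ω +
      K.knorm (z - y) ω * (2 * K.knorm z ω + 2 * c ω + K.knorm (z - y) ω) := by
  have hy : z + (-1 : L0 Ω μ) • (z - y) = y := by rw [neg_one_smul, neg_sub, add_sub_cancel]
  filter_upwards [hy ▸ ae_rieszEnergy_add_smul K f z (z - y) (-1),
    ae_neg_apply (1 : L0 Ω μ), ae_one_apply (γ := ℂ) (μ := μ), K.ae_norm_inner_le (z - y) z,
    ae_re_apply_le hc (z - y), K.ae_knorm_sq (z - y), K.ae_knorm_nonneg (z - y)]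
    with ω hE h₁ h₂ hcs hf hk hk₀
  rw [hE, h₁, h₂, Complex.normSq_neg, Complex.normSq_one, one_mul, ← hk, neg_one_mul,
    Complex.neg_re, Complex.sub_re]
  linarith [abs_le.mp ((Complex.abs_re_le_norm _).trans hcs), abs_le.mp hf]

end Bounded

/-- The order dual makes `p ≤ p'` mean that `p'` has the tighter bounds. -/
abbrev BoundPair {X β : Type*} [Lattice β] (E : X → β) : Type _ :=
  {p : βᵒᵈ × β // (∃ x, E x ≤ OrderDual.ofDual p.1) ∧ ∀ y, p.2 ≤ E y}

namespace BoundPair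

variable {X β : Type*} [Lattice β] {E : X → β}

def upper (p : BoundPair E) : β := OrderDual.ofDual p.1.1

def lower (p : BoundPair E) : β := p.1.2

noncomputable def point (p : BoundPair E) : X := p.2.1.choose

lemma le_upper (p : BoundPair E) : E p.point ≤ p.upper := p.2.1.choose_spec

lemma lower_le (p : BoundPair E) (y : X) : p.lower ≤ E y := p.2.2 y

lemma upper_antitone : Antitone (upper : BoundPair E → β) := fun _ _ h => h.1

lemma lower_monotone : Monotone (lower : BoundPair E → β) := fun _ _ h => h.2

abbrev semilatticeSup (hE : Directed (· ≥ ·) E) : SemilatticeSup (BoundPair E) :=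
  Subtype.semilatticeSup fun _ _ ⟨⟨x, hx⟩, hb⟩ ⟨⟨x', hx'⟩, hb'⟩ =>
    let ⟨z, hzx, hzx'⟩ := hE x x'
    ⟨⟨z, le_inf (hzx.trans hx) (hzx'.trans hx')⟩, fun y => sup_le (hb y) (hb' y)⟩

section Gap

variable {E : X → L0R Ω μ}

/-- If `a` never exceeds the gap between the bounds, then adding `a` to a lower bound gives a
lower bound again, so `a ≤ 0`. -/
lemma le_zero_of_forall_le_sub (p₀ : BoundPair E) {a : L0R Ω μ}
    (h : ∀ p : BoundPair E, a ≤ p.upper - p.lower) : a ≤ 0 := by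
  have hn : ∀ n : ℕ, ∀ y, p₀.lower + n • a ≤ E y := by
    intro n
    induction n with
    | zero => simpa using p₀.lower_le
    | succ n ih =>
      intro y
      have := h ⟨(OrderDual.toDual (E y), p₀.lower + n • a), ⟨y, le_rfl⟩, ih⟩
      rw [succ_nsmul, ← add_assoc]
      exact le_sub_iff_add_le'.mp this
  exact le_zero_of_forall_add_nsmul_le fun n => hn n p₀.point

noncomputable def modulus (p : BoundPair E) : L0R Ω μ := (2 : ℝ) • sqrtL (p.upper - p.lower)

lemma ae_modulus_apply (p : BoundPair E) :
    ∀ᵐ ω ∂μ, p.modulus ω = 2 * √(p.upper ω - p.lower ω) := by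
  filter_upwards [ae_smul_apply (2 : ℝ) (sqrtL (p.upper - p.lower)),
    ae_sqrtL_apply (p.upper - p.lower), ae_sub_apply p.upper p.lower] with ω h₁ h₂ h₃
  rw [modulus, h₁, h₂, h₃, smul_eq_mul]

lemma modulus_antitone : Antitone (modulus : BoundPair E → L0R Ω μ) := by
  intro p p' h
  rw [le_iff_ae]
  filter_upwards [p.ae_modulus_apply, p'.ae_modulus_apply,
    le_iff_ae.mp (upper_antitone h), le_iff_ae.mp (lower_monotone h)] with ω h₁ h₂ hu hl
  rw [h₁, h₂]
  gcongr

lemma infZero_modulus (p₀ : BoundPair E) : InfZero (modulus : BoundPair E → L0R Ω μ) := by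
  refine ⟨fun p => nonneg_iff_ae.mpr (p.ae_modulus_apply.mono fun ω h => by rw [h]; positivity),
    fun g hg => ?_⟩
  have hcont : Continuous fun r : ℝ => max r 0 ^ 2 / 4 := by fun_prop
  have ha : g.comp _ hcont ≤ 0 := p₀.le_zero_of_forall_le_sub fun p => by
    rw [le_iff_ae]
    filter_upwards [le_iff_ae.mp (hg p), p.ae_modulus_apply, AEEqFun.coeFn_comp _ hcont g,
      ae_sub_apply p.upper p.lower, le_iff_ae.mp ((p.lower_le p.point).trans p.le_upper)]
      with ω hgω hm hcomp hsub hlu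
    rw [hcomp, Function.comp_apply, hsub]
    rw [hm] at hgω
    have hmax : max (g ω) 0 ≤ 2 * √(p.upper ω - p.lower ω) := max_le hgω (by positivity)
    have hsq := pow_le_pow_left₀ (le_max_right _ _) hmax 2
    rw [mul_pow, Real.sq_sqrt (by linarith)] at hsq
    linarith
  rw [le_iff_ae]
  filter_upwards [le_iff_ae.mp ha, AEEqFun.coeFn_comp _ hcont g,
    ae_zero_apply (γ := ℝ) (μ := μ)] with ω hω hcomp h₀
  rw [hcomp, h₀, Function.comp_apply] at hω
  rw [h₀]
  nlinarith [le_max_left (g ω) 0, le_max_right (g ω) 0]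

end Gap

end BoundPair

section Riesz

variable {X : Type*} [AddCommGroup X] [Module (L0 Ω μ) X] {K : KHInner Ω μ X}
  {f : X →ₗ[L0 Ω μ] L0 Ω μ}

lemma exists_nonneg_bound (hb : ∃ c : L0R Ω μ, ∀ x, absL (f x) ≤ c * K.knorm x) :
    ∃ c : L0R Ω μ, 0 ≤ c ∧ ∀ x, absL (f x) ≤ c * K.knorm x := by
  obtain ⟨c, hc⟩ := hb
  refine ⟨c ⊔ 0, le_sup_right, fun x => ?_⟩
  rw [le_iff_ae]
  filter_upwards [le_iff_ae.mp (hc x), ae_mul_apply c (K.knorm x),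
    ae_mul_apply (c ⊔ 0) (K.knorm x), ae_sup_apply c 0, ae_zero_apply (γ := ℝ) (μ := μ),
    K.ae_knorm_nonneg x] with ω h h₁ h₂ h₃ h₄ hk
  rw [h₁] at h
  rw [h₂, h₃, h₄]
  exact h.trans (mul_le_mul_of_nonneg_right le_sup_left hk)

lemma boCauchyN_point (p₀ : BoundPair (rieszEnergy K f)) :
    BOCauchyN K.knorm (BoundPair.point : BoundPair (rieszEnergy K f) → X) :=
  ⟨BoundPair.modulus, BoundPair.modulus_antitone, BoundPair.infZero_modulus p₀,
    fun i j k hki hkj => knorm_sub_le_of_rieszEnergy_le K f k.lower_le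
      (i.le_upper.trans (BoundPair.upper_antitone hki))
      (j.le_upper.trans (BoundPair.upper_antitone hkj))⟩

/-- Past the pair `p₀` the points have nonpositive energy, hence norm at most `2c`, so near them
the energy is Lipschitz with a uniform constant. -/
lemma rieszEnergy_le_of_boConvN {c : L0R Ω μ} (hc₀ : 0 ≤ c)
    (hc : ∀ x, absL (f x) ≤ c * K.knorm x) (p₀ : BoundPair (rieszEnergy K f))
    (hp₀ : p₀.upper ≤ 0) {ψ : X}
    (hψ : BOConvN K.knorm (BoundPair.point : BoundPair (rieszEnergy K f) → X) ψ) (y : X) :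
    rieszEnergy K f ψ ≤ rieszEnergy K f y := by
  let _ := BoundPair.semilatticeSup (directed_rieszEnergy K f)
  obtain ⟨e, he_anti, he_inf, he⟩ := hψ
  rw [← sub_nonpos]
  refine he_inf.le_zero_of_forall_le_mul (add_nonneg (nsmul_nonneg hc₀ 6) (he_inf.1 p₀))
    fun p => ?_
  let py : BoundPair (rieszEnergy K f) :=
    ⟨(OrderDual.toDual (rieszEnergy K f y), p₀.lower), ⟨y, le_rfl⟩, p₀.lower_le⟩
  set P := p ⊔ py ⊔ p₀
  have hPy : rieszEnergy K f P.point ≤ rieszEnergy K f y :=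
    P.le_upper.trans (BoundPair.upper_antitone (le_sup_right.trans le_sup_left : py ≤ P))
  have hP₀ : rieszEnergy K f P.point ≤ 0 :=
    P.le_upper.trans ((BoundPair.upper_antitone (le_sup_right : p₀ ≤ P)).trans hp₀)
  have hd : K.knorm (P.point - ψ) ≤ e P := by simpa using (le_abs_self _).trans (he P)
  have hep : e P ≤ e p := he_anti (le_sup_left.trans le_sup_left)
  have hep₀ : e P ≤ e p₀ := he_anti le_sup_right
  rw [le_iff_ae]
  filter_upwards [ae_rieszEnergy_le_add hc ψ P.point,
    ae_knorm_le_of_rieszEnergy_nonpos hc hc₀ hP₀, le_iff_ae.mp hPy, le_iff_ae.mp hd,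
    le_iff_ae.mp hep, le_iff_ae.mp hep₀, ae_sub_apply (rieszEnergy K f ψ) (rieszEnergy K f y),
    ae_mul_apply (6 • c + e p₀) (e p), ae_add_apply (6 • c) (e p₀), ae_smul_apply 6 c,
    nonneg_iff_ae.mp hc₀, nonneg_iff_ae.mp (he_inf.1 p), K.ae_knorm_nonneg (P.point - ψ),
    K.ae_knorm_nonneg P.point]
    with ω hEω hzω hyω hdω hepω hep₀ω h₁ h₂ h₃ h₄ hcω hpω hd₀ hz₀
  rw [h₁, h₂, h₃, h₄, nsmul_eq_mul, Nat.cast_ofNat]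
  have hlip : K.knorm (P.point - ψ) ω *
      (2 * K.knorm P.point ω + 2 * c ω + K.knorm (P.point - ψ) ω) ≤
        (6 * c ω + e p₀ ω) * e p ω := by
    rw [mul_comm (6 * c ω + e p₀ ω)]
    exact mul_le_mul (hdω.trans hepω) (by linarith) (by positivity) hpω
  linarith

end Riesz

/-- (`L⁰`-valued Riesz representation theorem.) Every
`L⁰`-bounded `L⁰`-linear functional `f : X → L⁰` on a Kaplansky–Hilbert module `X`
over `L⁰` is of the form `f(φ) = ⟨φ,ψ⟩` for a unique `ψ ∈ X`. -/
theorem statement19 {X : Type*} [AddCommGroup X] [Module (L0 Ω μ) X]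
    (K : KHInner Ω μ X) (hK : K.IsKH) (f : X →ₗ[L0 Ω μ] L0 Ω μ)
    (hb : ∃ c : L0R Ω μ, ∀ x : X, absL (f x) ≤ c * K.knorm x) :
    ∃! ψ : X, ∀ φ : X, f φ = K.inner φ ψ := by
  obtain ⟨c, hc₀, hc⟩ := exists_nonneg_bound hb
  let _ := BoundPair.semilatticeSup (directed_rieszEnergy K f)
  let p₀ : BoundPair (rieszEnergy K f) :=
    ⟨(OrderDual.toDual 0, -(c * c)), ⟨0, (rieszEnergy_zero K f).le⟩,
      neg_mul_self_le_rieszEnergy hc⟩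
  obtain ⟨ψ, hψ⟩ := hK.2 _ ⟨p₀⟩ _ _ (boCauchyN_point p₀)
  have hmin := rieszEnergy_le_of_boConvN hc₀ hc p₀ le_rfl hψ
  exact ⟨ψ, eq_inner_of_forall_rieszEnergy_le K f hmin,
    fun ψ' hψ' => K.eq_of_forall_inner_eq fun φ =>
      (hψ' φ).symm.trans (eq_inner_of_forall_rieszEnergy_le K f hmin φ)⟩

end KHPaper
end
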